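/- Let φ : Δ^d → Δ^d be Lipschitz with respect to the sup-norm, with iterates Φ_t and fixed point m* that is a uniform global attractor, and assume there exist r₀ > 0 and a d×d real matrix K such that φ(m) = (m − m*)·K + m* for all m ∈ Δ^d with ‖m − m*‖ < r₀ (m* is non-singular). Let N > 0 and let (M(t))_{t∈ℕ} be a sequence of Δ^d-valued random vectors such that: all M(t) have the same distribution; E[M(t+1) | M(t)] = φ(M(t)) almost surely for all t; and for all t and all δ > 0, P(‖M(t+1) − φ(M(t))‖ ≥ δ | M(t)) ≤ e^{−2Nδ²} almost surely. Then there exist constants b, c > 0, depending only on φ, m*, r₀ and the Lipschitz constant (and not on N), such that ‖E[M(0)] − m*‖ ≤ b·e^{−cN}. -/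

import Mathlib

/-!
Near `m*` the map is affine, so orbits started close to `m*` are `m* + (m - m*) Kⁿ`; uniform
attraction then forces `v Kⁿ → 0` for every direction `v` of the simplex, so `v ↦ v - v K` is
injective there and `‖v‖ ≤ C ‖v - v K‖`. By stationarity the mean `m̄` equals `E φ(M 0)`, so
`(m̄ - m*) - (m̄ - m*) K` is the mean of the affine defect of `φ`, which is bounded and vanishes
unless `‖M 0 - m*‖ ≥ r₀`. Stationarity again moves this event to time `T`, when the deterministic
orbit is within `r₀/2` of `m*`; unless one of the first `T` steps deviates by `δ`, the process
shadows that orbit, and a union bound with the Hoeffding tail gives `T e^{-2Nδ²}`.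
-/

open MeasureTheory Filter Topology Set
open scoped NNReal

theorem norm_sub_le_one_of_mem_stdSimplex {ι : Type*} [Fintype ι] {x y : ι → ℝ}
    (hx : x ∈ stdSimplex ℝ ι) (hy : y ∈ stdSimplex ℝ ι) : ‖x - y‖ ≤ 1 := by
  refine (pi_norm_le_iff_of_nonneg zero_le_one).2 fun i => ?_
  have hxi := mem_Icc_of_mem_stdSimplex hx i
  have hyi := mem_Icc_of_mem_stdSimplex hy i
  rw [Pi.sub_apply, Real.norm_eq_abs, abs_le]
  constructor <;> linarith [hxi.1, hxi.2, hyi.1, hyi.2]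

theorem ContinuousOn.measurable_comp_of_forall_mem {X Y Ω : Type*} [TopologicalSpace X]
    [MeasurableSpace X] [OpensMeasurableSpace X] [TopologicalSpace Y] [MeasurableSpace Y]
    [BorelSpace Y] [MeasurableSpace Ω] {f : X → Y} {s : Set X} (hf : ContinuousOn f s)
    {g : Ω → X} (hg : Measurable g) (hgs : ∀ ω, g ω ∈ s) : Measurable fun ω => f (g ω) :=
  hf.domRestrict.measurable.comp (hg.subtype_mk (h := hgs))

theorem Submodule.exists_norm_le_mul_norm_of_injOn {𝕜 E F : Type*} [NontriviallyNormedField 𝕜]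
    [CompleteSpace 𝕜] [NormedAddCommGroup E] [NormedSpace 𝕜 E] [FiniteDimensional 𝕜 E]
    [NormedAddCommGroup F] [NormedSpace 𝕜 F] (V : Submodule 𝕜 E) (g : E →ₗ[𝕜] F)
    (hg : ∀ v ∈ V, g v = 0 → v = 0) : ∃ C > 0, ∀ v ∈ V, ‖v‖ ≤ C * ‖g v‖ := by
  obtain ⟨C, hC, hanti⟩ := (g.domRestrict V).exists_antilipschitzWith
    (LinearMap.ker_eq_bot'.2 fun v hv => Subtype.ext (hg v v.2 hv))
  exact ⟨C, hC, fun v hv => ZeroHomClass.bound_of_antilipschitz _ hanti (⟨v, hv⟩ : V)⟩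

section Dynamics

variable {E : Type*} [NormedAddCommGroup E] {f : E → E} {s : Set E} {a : E}

theorem tendstoUniformlyOn_iterate_of_forall_norm_sub_le
    (h : ∀ ε : ℝ, 0 < ε → ∃ T : ℕ, ∀ t ≥ T, ∀ x ∈ s, ‖f^[t] x - a‖ ≤ ε) :
    TendstoUniformlyOn (fun n => f^[n]) (fun _ => a) atTop s := by
  refine Metric.tendstoUniformlyOn_iff.2 fun ε hε => ?_
  obtain ⟨T, hT⟩ := h (ε / 2) (half_pos hε)
  filter_upwards [eventually_ge_atTop T] with t ht x hx
  rw [dist_comm, dist_eq_norm]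
  exact (hT t ht x hx).trans_lt (half_lt_self hε)

theorem norm_sub_iterate_le_of_forall_norm_sub_le {L : ℝ≥0} (hf : LipschitzOnWith L f s)
    (hfs : MapsTo f s s) {x : ℕ → E} (hx : ∀ n, x n ∈ s) {δ : ℝ} {T : ℕ}
    (hδ : ∀ n < T, ‖x (n + 1) - f (x n)‖ ≤ δ) :
    ‖x T - f^[T] (x 0)‖ ≤ δ * ∑ i ∈ Finset.range T, (L : ℝ) ^ i := by
  induction T with
  | zero => simp
  | succ T ih =>
    have hprev := ih fun n hn => hδ n (Nat.lt_succ_of_lt hn)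
    have hlip := hf.norm_sub_le (hx T) (hfs.iterate T (hx 0))
    rw [Function.iterate_succ_apply']
    calc ‖x (T + 1) - f (f^[T] (x 0))‖
        ≤ ‖x (T + 1) - f (x T)‖ + ‖f (x T) - f (f^[T] (x 0))‖ :=
          norm_sub_le_norm_sub_add_norm_sub _ _ _
      _ ≤ δ + L * (δ * ∑ i ∈ Finset.range T, (L : ℝ) ^ i) := by
        gcongr
        · exact hδ T (Nat.lt_succ_self T)
        · exact hlip.trans (by gcongr)
      _ = δ * ∑ i ∈ Finset.range (T + 1), (L : ℝ) ^ i := by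
        simp only [Finset.sum_range_succ', pow_succ', ← Finset.mul_sum]
        ring

theorem eventually_forall_iterate_dist_lt (hf : ContinuousOn f s) (hfs : MapsTo f s s)
    (ha : a ∈ s) (hfa : f a = a) (hattr : TendstoUniformlyOn (fun n => f^[n]) (fun _ => a) atTop s)
    {r : ℝ} (hr : 0 < r) : ∀ᶠ x in 𝓝[s] a, ∀ n, dist (f^[n] x) a < r := by
  obtain ⟨T, hT⟩ := eventually_atTop.1 (Metric.tendstoUniformlyOn_iff.1 hattr r hr)
  have hnear : ∀ᶠ x in 𝓝[s] a, ∀ n ∈ Iio T, dist (f^[n] x) a < r := by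
    refine (eventually_all_finite (finite_Iio T)).2 fun n _ => ?_
    have hcont := hf.iterate hfs n a ha
    rw [ContinuousWithinAt, Function.iterate_fixed hfa n] at hcont
    exact hcont (Metric.ball_mem_nhds a hr)
  filter_upwards [hnear, self_mem_nhdsWithin] with x hx hxs n
  rcases lt_or_ge n T with hn | hn
  · exact hx n hn
  · rw [dist_comm]
    exact hT n hn x hxs

variable [NormedSpace ℝ E]

theorem eventually_forall_iterate_sub_eq_pow_apply (hf : ContinuousOn f s) (hfs : MapsTo f s s)
    (ha : a ∈ s) (hattr : TendstoUniformlyOn (fun n => f^[n]) (fun _ => a) atTop s)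
    {A : Module.End ℝ E} {r : ℝ} (hr : 0 < r)
    (haff : ∀ x ∈ s, ‖x - a‖ < r → f x = A (x - a) + a) :
    ∀ᶠ x in 𝓝[s] a, ∀ n, f^[n] x - a = (A ^ n) (x - a) := by
  have hfa : f a = a := by simpa using haff a ha (by simpa using hr)
  filter_upwards [eventually_forall_iterate_dist_lt hf hfs ha hfa hattr hr, self_mem_nhdsWithin]
    with x hx hxs n
  induction n with
  | zero => simp
  | succ n ih =>
    rw [Function.iterate_succ_apply',
      haff _ (hfs.iterate n hxs) (by simpa [dist_eq_norm] using hx n), add_sub_cancel_right, ih,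
      pow_succ', Module.End.mul_apply]

section Linearization

variable {A : Module.End ℝ E} (hs : Convex ℝ s) (ha : a ∈ s)
  (hlin : ∀ᶠ x in 𝓝[s] a, ∀ n, f^[n] x - a = (A ^ n) (x - a))
  (hattr : ∀ x ∈ s, Tendsto (fun n => f^[n] x) atTop (𝓝 a))
include hs ha hlin hattr

/-- Pull `y` towards `a` along the segment until the linearization applies, and rescale. -/
theorem tendsto_pow_apply_sub {y : E} (hy : y ∈ s) :
    Tendsto (fun n => (A ^ n) (y - a)) atTop (𝓝 0) := by
  have hseg : Tendsto (fun t : ℝ => a + t • (y - a)) (𝓝[>] 0) (𝓝[s] a) := by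
    refine tendsto_nhdsWithin_iff.2 ⟨?_, ?_⟩
    · refine tendsto_nhdsWithin_of_tendsto_nhds ?_
      have hcont : Continuous fun t : ℝ => a + t • (y - a) := by fun_prop
      simpa using hcont.tendsto 0
    · filter_upwards [Ioc_mem_nhdsGT one_pos] with t ht
      exact hs.add_smul_sub_mem ha hy (Ioc_subset_Icc_self ht)
  obtain ⟨t, ⟨hlin_t, hz⟩, ht⟩ :=
    ((hseg.eventually (hlin.and self_mem_nhdsWithin)).and self_mem_nhdsWithin).exists
  have hrescale : ∀ n, (A ^ n) (y - a) = t⁻¹ • (f^[n] (a + t • (y - a)) - a) := fun n => by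
    rw [hlin_t n, add_sub_cancel_left, map_smul, smul_smul, inv_mul_cancel₀ (ne_of_gt ht),
      one_smul]
  simpa [← hrescale] using ((hattr _ hz).sub_const a).const_smul t⁻¹

theorem tendsto_pow_apply_of_mem_vectorSpan {v : E} (hv : v ∈ vectorSpan ℝ s) :
    Tendsto (fun n => (A ^ n) v) atTop (𝓝 0) := by
  rw [vectorSpan_eq_span_vsub_set_right ℝ ha] at hv
  induction hv using Submodule.span_induction with
  | mem v hv =>
    obtain ⟨y, hy, rfl⟩ := hv
    exact tendsto_pow_apply_sub hs ha hlin hattr hy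
  | zero => simp
  | add v w _ _ hv hw => simpa using hv.add hw
  | smul c v _ hv => simpa using hv.const_smul c

theorem eq_zero_of_mem_vectorSpan_of_apply_eq_self {v : E} (hv : v ∈ vectorSpan ℝ s)
    (hAv : A v = v) : v = 0 := by
  have hfix : ∀ n, (A ^ n) v = v := fun n => by
    rw [Module.End.coe_pow, Function.iterate_fixed hAv]
  exact tendsto_nhds_unique (tendsto_const_nhds.congr fun n => (hfix n).symm)
    (tendsto_pow_apply_of_mem_vectorSpan hs ha hlin hattr hv)

end Linearization

theorem exists_norm_le_mul_norm_sub_apply [FiniteDimensional ℝ E] (hf : ContinuousOn f s)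
    (hfs : MapsTo f s s) (hs : Convex ℝ s) (ha : a ∈ s)
    (hattr : TendstoUniformlyOn (fun n => f^[n]) (fun _ => a) atTop s) {A : Module.End ℝ E}
    {r : ℝ} (hr : 0 < r) (haff : ∀ x ∈ s, ‖x - a‖ < r → f x = A (x - a) + a) :
    ∃ C > 0, ∀ v ∈ vectorSpan ℝ s, ‖v‖ ≤ C * ‖v - A v‖ :=
  (vectorSpan ℝ s).exists_norm_le_mul_norm_of_injOn (LinearMap.id - A) fun _ hv hv0 =>
    eq_zero_of_mem_vectorSpan_of_apply_eq_self hs ha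
      (eventually_forall_iterate_sub_eq_pow_apply hf hfs ha hattr hr haff)
      (fun _ hx => hattr.tendsto_at hx) hv (sub_eq_zero.1 hv0).symm

end Dynamics

section Probability

variable {Ω : Type*}

theorem measureReal_le_of_condExp_indicator_le {m m₀ : MeasurableSpace Ω} {μ : Measure[m₀] Ω}
    [IsProbabilityMeasure μ] (hm : m ≤ m₀) {B : Set Ω} (hB : MeasurableSet B) {c : ℝ}
    (h : ∀ᵐ ω ∂μ, μ[B.indicator (fun _ => (1 : ℝ)) | m] ω ≤ c) : μ.real B ≤ c :=
  calc μ.real B = ∫ ω, μ[B.indicator (fun _ => (1 : ℝ)) | m] ω ∂μ := by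
        rw [integral_condExp hm]; exact (integral_indicator_one hB).symm
    _ ≤ ∫ _, c ∂μ := integral_mono_ae integrable_condExp (integrable_const c) h
    _ = c := by simp

variable [MeasurableSpace Ω] {μ : Measure Ω}

theorem integrable_of_forall_mem_stdSimplex {ι : Type*} [Fintype ι] [IsFiniteMeasure μ]
    {X : Ω → ι → ℝ} (hX : AEStronglyMeasurable X μ) (hXS : ∀ ω, X ω ∈ stdSimplex ℝ ι) :
    Integrable X μ :=
  .of_bound hX 1 (.of_forall fun ω => by simpa using stdSimplex_subset_closedBall (hXS ω))

theorem integral_mem_stdSimplex {ι : Type*} [Fintype ι] [IsProbabilityMeasure μ]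
    {X : Ω → ι → ℝ} (hX : Measurable X) (hXS : ∀ ω, X ω ∈ stdSimplex ℝ ι) :
    ∫ ω, X ω ∂μ ∈ stdSimplex ℝ ι :=
  (convex_stdSimplex ℝ ι).integral_mem (isClosed_stdSimplex ℝ ι) (.of_forall hXS)
    (integrable_of_forall_mem_stdSimplex hX.aestronglyMeasurable hXS)

theorem integral_comp_eq_integral_of_condExp_ae_eq {E : Type*} [NormedAddCommGroup E]
    [NormedSpace ℝ E] [CompleteSpace E] [MeasurableSpace E] [BorelSpace E]
    [IsProbabilityMeasure μ] {f : E → E} {X Y : Ω → E} (hX : Measurable X) (hY : Measurable Y)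
    (hXY : μ.map Y = μ.map X)
    (hcond : μ[Y | MeasurableSpace.comap X inferInstance] =ᵐ[μ] fun ω => f (X ω)) :
    ∫ ω, f (X ω) ∂μ = ∫ ω, X ω ∂μ := by
  rw [← integral_congr_ae hcond, integral_condExp (measurable_iff_comap_le.1 hX)]
  exact ProbabilityTheory.IdentDistrib.integral_eq ⟨hY.aemeasurable, hX.aemeasurable, hXY⟩

theorem norm_integral_le_mul_measureReal_of_forall_compl_eq_zero {E : Type*}
    [NormedAddCommGroup E] [NormedSpace ℝ E] [IsFiniteMeasure μ] {F : Ω → E} {B : Set Ω}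
    {C : ℝ} (hF : ∀ ω, ‖F ω‖ ≤ C) (hB : ∀ ω ∉ B, F ω = 0) : ‖∫ ω, F ω ∂μ‖ ≤ C * μ.real B := by
  rw [← setIntegral_eq_integral_of_forall_compl_eq_zero hB]
  exact norm_setIntegral_le_of_norm_le_const (measure_lt_top μ B) fun ω _ => hF ω

theorem measureReal_le_norm_sub_le_mul_of_stationary {E : Type*} [NormedAddCommGroup E]
    [MeasurableSpace E] [OpensMeasurableSpace E] [IsFiniteMeasure μ] {f : E → E} {s : Set E}
    {a : E} {L : ℝ≥0} (hf : LipschitzOnWith L f s) (hfs : MapsTo f s s) {r δ p : ℝ} {T : ℕ}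
    (hT : ∀ x ∈ s, ‖f^[T] x - a‖ ≤ r / 2) (hδ : (∑ i ∈ Finset.range T, (L : ℝ) ^ i) * δ < r / 2)
    {M : ℕ → Ω → E} (hM : ∀ t, Measurable (M t)) (hMs : ∀ t ω, M t ω ∈ s)
    (hstat : ∀ t, μ.map (M t) = μ.map (M 0))
    (hstep : ∀ t, μ.real {ω | δ ≤ ‖M (t + 1) ω - f (M t ω)‖} ≤ p) :
    μ.real {ω | r ≤ ‖M 0 ω - a‖} ≤ T * p := by
  have hfar : MeasurableSet {x : E | r ≤ ‖x - a‖} :=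
    measurableSet_le measurable_const (continuous_norm.comp (continuous_sub_right a)).measurable
  have hident : ProbabilityTheory.IdentDistrib (M T) (M 0) μ μ :=
    ⟨(hM T).aemeasurable, (hM 0).aemeasurable, hstat T⟩
  have hsub : {ω | r ≤ ‖M T ω - a‖} ⊆
      ⋃ t ∈ Finset.range T, {ω | δ ≤ ‖M (t + 1) ω - f (M t ω)‖} := by
    intro ω hω
    by_contra hsmall
    simp only [mem_iUnion, mem_ofPred_eq, Finset.mem_range, not_exists, not_le] at hsmall
    have hshadow := norm_sub_iterate_le_of_forall_norm_sub_le hf hfs (hMs · ω)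
      fun n hn => (hsmall n hn).le
    have hclose := norm_sub_le_norm_sub_add_norm_sub (M T ω) (f^[T] (M 0 ω)) a
    linarith [hT _ (hMs 0 ω), show r ≤ ‖M T ω - a‖ from hω]
  calc μ.real {ω | r ≤ ‖M 0 ω - a‖} = μ.real {ω | r ≤ ‖M T ω - a‖} :=
        congrArg ENNReal.toReal (hident.measure_mem_eq hfar).symm
    _ ≤ ∑ t ∈ Finset.range T, μ.real {ω | δ ≤ ‖M (t + 1) ω - f (M t ω)‖} :=
        (measureReal_mono hsub (measure_ne_top _ _)).trans (measureReal_biUnion_finset_le _ _)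
    _ ≤ T * p := (Finset.sum_le_sum fun t _ => hstep t).trans_eq (by simp)

theorem norm_integral_sub_sub_apply_le [IsProbabilityMeasure μ] {ι : Type*} [Fintype ι]
    {φ : (ι → ℝ) → ι → ℝ} (hφ : MapsTo φ (stdSimplex ℝ ι) (stdSimplex ℝ ι)) {a : ι → ℝ}
    (ha : a ∈ stdSimplex ℝ ι) {A : (ι → ℝ) →L[ℝ] ι → ℝ} {r : ℝ}
    (haff : ∀ m ∈ stdSimplex ℝ ι, ‖m - a‖ < r → φ m = A (m - a) + a) {X : Ω → ι → ℝ}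
    (hX : Measurable X) (hφX : Measurable fun ω => φ (X ω))
    (hXS : ∀ ω, X ω ∈ stdSimplex ℝ ι) (hmean : ∫ ω, φ (X ω) ∂μ = ∫ ω, X ω ∂μ) :
    ‖(∫ ω, X ω ∂μ - a) - A (∫ ω, X ω ∂μ - a)‖ ≤ (1 + ‖A‖) * μ.real {ω | r ≤ ‖X ω - a‖} := by
  have hXi : Integrable X μ := integrable_of_forall_mem_stdSimplex hX.aestronglyMeasurable hXS
  have hφXi : Integrable (fun ω => φ (X ω)) μ :=
    integrable_of_forall_mem_stdSimplex hφX.aestronglyMeasurable fun ω => hφ (hXS ω)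
  have hXai : Integrable (fun ω => X ω - a) μ := hXi.sub (integrable_const a)
  have hφXai : Integrable (fun ω => φ (X ω) - a) μ := hφXi.sub (integrable_const a)
  have hdefect : ∫ ω, (φ (X ω) - a - A (X ω - a)) ∂μ = (∫ ω, X ω ∂μ - a) - A (∫ ω, X ω ∂μ - a) := by
    rw [integral_sub hφXai (A.integrable_comp hXai),
      A.integral_comp_comm hXai, integral_sub hφXi (integrable_const a),
      integral_sub hXi (integrable_const a), hmean, integral_const, probReal_univ, one_smul]
  rw [← hdefect]
  refine norm_integral_le_mul_measureReal_of_forall_compl_eq_zero (fun ω => ?_) fun ω hω => ?_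
  · have hφXa := norm_sub_le_one_of_mem_stdSimplex (hφ (hXS ω)) ha
    have hAXa : ‖A (X ω - a)‖ ≤ ‖A‖ :=
      (A.le_opNorm _).trans (mul_le_of_le_one_right (norm_nonneg A)
        (norm_sub_le_one_of_mem_stdSimplex (hXS ω) ha))
    exact (norm_sub_le _ _).trans (add_le_add hφXa hAXa)
  · rw [haff _ (hXS ω) (not_le.1 hω), add_sub_cancel_right, sub_self]

end Probability

theorem stationary_mean_exponentially_close_general
    (d : ℕ) (φ : (Fin d → ℝ) → (Fin d → ℝ))
    (L : ℝ)
    (hself : ∀ m ∈ stdSimplex ℝ (Fin d), φ m ∈ stdSimplex ℝ (Fin d))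
    (hlip : ∀ m₁ ∈ stdSimplex ℝ (Fin d), ∀ m₂ ∈ stdSimplex ℝ (Fin d),
      ‖φ m₁ - φ m₂‖ ≤ L * ‖m₁ - m₂‖)
    (mstar : Fin d → ℝ) (hmstarS : mstar ∈ stdSimplex ℝ (Fin d))
    (hattr : ∀ ε : ℝ, 0 < ε → ∃ T : ℕ, ∀ t ≥ T, ∀ m ∈ stdSimplex ℝ (Fin d),
      ‖φ^[t] m - mstar‖ ≤ ε)
    (r₀ : ℝ) (hr₀ : 0 < r₀) (K : Matrix (Fin d) (Fin d) ℝ)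
    (haff : ∀ m ∈ stdSimplex ℝ (Fin d), ‖m - mstar‖ < r₀ →
      φ m = Matrix.vecMul (m - mstar) K + mstar) :
    ∃ b c : ℝ, 0 < b ∧ 0 < c ∧
      ∀ (N : ℝ), 0 < N →
      ∀ (Ω : Type) (_ : MeasurableSpace Ω) (μ : Measure Ω), IsProbabilityMeasure μ →
      ∀ (M : ℕ → Ω → (Fin d → ℝ)),
        (∀ t, Measurable (M t)) →
        (∀ t ω, M t ω ∈ stdSimplex ℝ (Fin d)) →
        (∀ t, Measure.map (M t) μ = Measure.map (M 0) μ) →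
        (∀ t, μ[M (t + 1) | MeasurableSpace.comap (M t) inferInstance]
            =ᵐ[μ] fun ω => φ (M t ω)) →
        (∀ t : ℕ, ∀ δ : ℝ, 0 < δ → ∀ᵐ ω ∂μ,
          (μ[Set.indicator {ω' | δ ≤ ‖M (t + 1) ω' - φ (M t ω')‖} (fun _ => (1 : ℝ))
              | MeasurableSpace.comap (M t) inferInstance]) ω
            ≤ Real.exp (-2 * N * δ ^ 2)) →
        ‖(∫ ω, M 0 ω ∂μ) - mstar‖ ≤ b * Real.exp (-c * N) := by
  have hφlip : LipschitzOnWith L.toNNReal φ (stdSimplex ℝ (Fin d)) :=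
    .of_dist_le' fun m₁ h₁ m₂ h₂ => by simpa only [dist_eq_norm] using hlip m₁ h₁ m₂ h₂
  have hunif := tendstoUniformlyOn_iterate_of_forall_norm_sub_le hattr
  set A := (Matrix.vecMulLinear K).toContinuousLinearMap
  obtain ⟨C, hC, hCv⟩ := exists_norm_le_mul_norm_sub_apply hφlip.continuousOn hself
    (convex_stdSimplex ℝ _) hmstarS hunif (A := A) hr₀ haff
  obtain ⟨T, hT⟩ := hattr (r₀ / 2) (half_pos hr₀)
  obtain ⟨δ, hδ, hδσ⟩ := exists_pos_mul_lt (half_pos hr₀)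
    (∑ i ∈ Finset.range T, (L.toNNReal : ℝ) ^ i)
  refine ⟨C * (1 + ‖A‖) * (T + 1), 2 * δ ^ 2, by positivity, by positivity, ?_⟩
  intro N hN Ω _ μ _ M hM hMS hstat hcond htail
  have hφM : ∀ t, Measurable fun ω => φ (M t ω) := fun t =>
    hφlip.continuousOn.measurable_comp_of_forall_mem (hM t) (hMS t)
  have hmean := integral_comp_eq_integral_of_condExp_ae_eq (hM 0) (hM 1) (hstat 1) (hcond 0)
  have hv : ∫ ω, M 0 ω ∂μ - mstar ∈ vectorSpan ℝ (stdSimplex ℝ (Fin d)) :=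
    vsub_mem_vectorSpan ℝ (integral_mem_stdSimplex (hM 0) (hMS 0)) hmstarS
  have hfar := measureReal_le_norm_sub_le_mul_of_stationary hφlip hself (hT T le_rfl) hδσ hM hMS
    hstat fun t => measureReal_le_of_condExp_indicator_le (measurable_iff_comap_le.1 (hM t))
      (measurableSet_le measurable_const ((hM (t + 1)).sub (hφM t)).norm) (htail t δ hδ)
  calc ‖∫ ω, M 0 ω ∂μ - mstar‖
      ≤ C * ‖(∫ ω, M 0 ω ∂μ - mstar) - A (∫ ω, M 0 ω ∂μ - mstar)‖ := hCv _ hv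
    _ ≤ C * ((1 + ‖A‖) * (T * Real.exp (-2 * N * δ ^ 2))) := by
        gcongr
        exact (norm_integral_sub_sub_apply_le hself hmstarS haff (hM 0) (hφM 0) (hMS 0)
          hmean).trans (by gcongr)
    _ = C * (1 + ‖A‖) * T * Real.exp (-(2 * δ ^ 2) * N) := by ring_nf
    _ ≤ C * (1 + ‖A‖) * (T + 1) * Real.exp (-(2 * δ ^ 2) * N) := by
        gcongr
        linarith

/-- (Theorem C.1(i) of the paper.) Let `φ : Δ^d → Δ^d` be Lipschitz for the
sup-norm, with fixed point `m*` that is a uniform global attractor and around which `φ` is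
affine (non-singularity). Then there are constants `b, c > 0`, depending only on `φ`, `m*`,
`r₀` and the Lipschitz constant — in particular not on `N` — such that for every `N > 0` and
every identically distributed simplex-valued process `(M(t))` with one-step conditional mean
`E[M(t+1) | M(t)] = φ(M(t))` a.s. and conditional Hoeffding tail
`P(‖M(t+1) − φ(M(t))‖ ≥ δ | M(t)) ≤ e^{−2Nδ²}` a.s., one has
`‖E[M(0)] − m*‖ ≤ b e^{−cN}`. -/
theorem stationary_mean_exponentially_close
    (d : ℕ) (φ : (Fin d → ℝ) → (Fin d → ℝ))
    (L : ℝ) (hL : 0 < L)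
    (hself : ∀ m ∈ stdSimplex ℝ (Fin d), φ m ∈ stdSimplex ℝ (Fin d))
    (hlip : ∀ m₁ ∈ stdSimplex ℝ (Fin d), ∀ m₂ ∈ stdSimplex ℝ (Fin d),
      ‖φ m₁ - φ m₂‖ ≤ L * ‖m₁ - m₂‖)
    (mstar : Fin d → ℝ) (hmstarS : mstar ∈ stdSimplex ℝ (Fin d))
    (hfix : φ mstar = mstar)
    (hattr : ∀ ε : ℝ, 0 < ε → ∃ T : ℕ, ∀ t ≥ T, ∀ m ∈ stdSimplex ℝ (Fin d),
      ‖φ^[t] m - mstar‖ ≤ ε)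
    (r₀ : ℝ) (hr₀ : 0 < r₀) (K : Matrix (Fin d) (Fin d) ℝ)
    (haff : ∀ m ∈ stdSimplex ℝ (Fin d), ‖m - mstar‖ < r₀ →
      φ m = Matrix.vecMul (m - mstar) K + mstar) :
    ∃ b c : ℝ, 0 < b ∧ 0 < c ∧
      ∀ (N : ℝ), 0 < N →
      ∀ (Ω : Type) (_ : MeasurableSpace Ω) (μ : Measure Ω), IsProbabilityMeasure μ →
      ∀ (M : ℕ → Ω → (Fin d → ℝ)),
        (∀ t, Measurable (M t)) →
        (∀ t ω, M t ω ∈ stdSimplex ℝ (Fin d)) →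
        (∀ t, Measure.map (M t) μ = Measure.map (M 0) μ) →
        (∀ t, μ[M (t + 1) | MeasurableSpace.comap (M t) inferInstance]
            =ᵐ[μ] fun ω => φ (M t ω)) →
        (∀ t : ℕ, ∀ δ : ℝ, 0 < δ → ∀ᵐ ω ∂μ,
          (μ[Set.indicator {ω' | δ ≤ ‖M (t + 1) ω' - φ (M t ω')‖} (fun _ => (1 : ℝ))
              | MeasurableSpace.comap (M t) inferInstance]) ω
            ≤ Real.exp (-2 * N * δ ^ 2)) →
        ‖(∫ ω, M 0 ω ∂μ) - mstar‖ ≤ b * Real.exp (-c * N) :=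
  stationary_mean_exponentially_close_general d φ L hself hlip mstar hmstarS hattr r₀ hr₀ K haff
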